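/- Let N ≤ H be finite-index normal subgroups of B₃, both contained in PB₃. Then H_ord divides N_ord, N ∩ F₂ ≤ H ∩ F₂, and every pair (m,f) representing a GT-shadow with target N also represents a GT-shadow with target H; hence there is a well-defined reduction map R_{N,H} : GT(N) → GT(H) sending [m,f] to (m + H_ord ℤ, f·(H∩F₂)). -/

import Mathlib

def braidRel : Set (FreeGroup (Fin 2)) :=
  {FreeGroup.of 0 * FreeGroup.of 1 * FreeGroup.of 0 *
    (FreeGroup.of 1 * FreeGroup.of 0 * FreeGroup.of 1)⁻¹}

/-- The Artin braid group on 3 strands. -/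
abbrev B3 := PresentedGroup braidRel

def σ₁ : B3 := PresentedGroup.of 0
def σ₂ : B3 := PresentedGroup.of 1

/-- The standard projection B₃ → S₃. -/
def ρ : B3 →* Equiv.Perm (Fin 3) :=
  PresentedGroup.toGroup (f := ![Equiv.swap 0 1, Equiv.swap 1 2]) (by
    intro r hr
    simp only [braidRel, Set.mem_singleton_iff] at hr
    subst hr
    simp only [map_mul, map_inv, FreeGroup.lift_apply_of]
    decide)

/-- The pure braid group on 3 strands. -/
def PB3 : Subgroup B3 := ρ.ker

def c : B3 := (σ₁ * σ₂ * σ₁) ^ 2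

abbrev F2 := FreeGroup (Fin 2)
def xx : F2 := FreeGroup.of 0
def yy : F2 := FreeGroup.of 1

/-- The identification of F₂ with ⟨σ₁², σ₂²⟩ ≤ PB₃. -/
def ι : F2 →* B3 := FreeGroup.lift ![σ₁ ^ 2, σ₂ ^ 2]

/-- The pair (m, f) satisfies the two hexagon relations modulo N. -/
def Hex (N : Subgroup B3) [N.Normal] (m : ℤ) (f : F2) : Prop :=
  QuotientGroup.mk' N (σ₁ ^ (2 * m + 1) * (ι f)⁻¹ * σ₂ ^ (2 * m + 1) * ι f) =
      QuotientGroup.mk' N ((ι f)⁻¹ * σ₁ * σ₂ * (σ₁ ^ 2) ^ (-m) * c ^ m) ∧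
  QuotientGroup.mk' N ((ι f)⁻¹ * σ₂ ^ (2 * m + 1) * ι f * σ₁ ^ (2 * m + 1)) =
      QuotientGroup.mk' N (σ₂ * σ₁ * (σ₂ ^ 2) ^ (-m) * c ^ m * ι f)

/-- N_ord: the lcm of the orders of x₁₂N, x₂₃N and cN in B₃/N. -/
noncomputable def Nord (N : Subgroup B3) [N.Normal] : ℕ :=
  Nat.lcm
    (Nat.lcm (orderOf (QuotientGroup.mk' N (σ₁ ^ 2)))
      (orderOf (QuotientGroup.mk' N (σ₂ ^ 2))))
    (orderOf (QuotientGroup.mk' N c))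

/-- The endomorphism E_{m,f} of F₂. -/
def Emap (m : ℤ) (f : F2) : F2 →* F2 :=
  FreeGroup.lift ![xx ^ (2 * m + 1), f⁻¹ * yy ^ (2 * m + 1) * f]

/-- [m, f] is a GT-shadow with target N and kernel (source) K. -/
def IsShadow (K N : Subgroup B3) [N.Normal] (m : ℤ) (f : F2) : Prop :=
  Hex N m f ∧
  (∃ g ∈ commutator F2, g⁻¹ * f ∈ N.comap ι) ∧
  IsUnit ((2 * m + 1 : ℤ) : ZMod (Nord N)) ∧
  ∃ T : B3 →* B3 ⧸ N,
    T σ₁ = QuotientGroup.mk' N (σ₁ ^ (2 * m + 1)) ∧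
    T σ₂ = QuotientGroup.mk' N ((ι f)⁻¹ * σ₂ ^ (2 * m + 1) * ι f) ∧
    Function.Surjective T ∧
    T.ker = K

/-- [m, f] is a GT-shadow with target N (with unspecified source). -/
def IsShadowTgt (N : Subgroup B3) [N.Normal] (m : ℤ) (f : F2) : Prop :=
  ∃ K : Subgroup B3, IsShadow K N m f

/-! Everything descends along the projection `B₃/N → B₃/H`: orders of images divide orders,
the hexagon relations modulo `N` map to those modulo `H`, a unit modulo `N_ord` stays a unit
modulo its divisor `H_ord`, and composing `T_{m,f}` with the projection is again surjective. -/

section QuotientOfLE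

variable {G : Type*} [Group G] {N H : Subgroup G} [N.Normal] [H.Normal]

abbrev quotientMapOfLE (hNH : N ≤ H) : G ⧸ N →* G ⧸ H :=
  QuotientGroup.map N H (MonoidHom.id G) hNH

theorem quotientMapOfLE_mk' (hNH : N ≤ H) (x : G) :
    quotientMapOfLE hNH (QuotientGroup.mk' N x) = QuotientGroup.mk' H x :=
  rfl

theorem quotientMapOfLE_surjective (hNH : N ≤ H) : Function.Surjective (quotientMapOfLE hNH) :=
  QuotientGroup.map_surjective_of_surjective N H (MonoidHom.id G) QuotientGroup.mk_surjective hNH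

theorem orderOf_mk'_dvd_of_le (hNH : N ≤ H) (x : G) :
    orderOf (QuotientGroup.mk' H x) ∣ orderOf (QuotientGroup.mk' N x) :=
  quotientMapOfLE_mk' hNH x ▸ orderOf_map_dvd (quotientMapOfLE hNH) _

end QuotientOfLE

theorem ZMod.isUnit_intCast_of_dvd {m n : ℕ} (hmn : m ∣ n) {a : ℤ} (ha : IsUnit (a : ZMod n)) :
    IsUnit (a : ZMod m) :=
  map_intCast (ZMod.castHom hmn (ZMod m)) a ▸ ha.map (ZMod.castHom hmn (ZMod m))

section Reduction

variable {N H : Subgroup B3} [N.Normal] [H.Normal]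

theorem Nord_dvd_of_le (hNH : N ≤ H) : Nord H ∣ Nord N :=
  lcm_dvd_lcm (lcm_dvd_lcm (orderOf_mk'_dvd_of_le hNH _) (orderOf_mk'_dvd_of_le hNH _))
    (orderOf_mk'_dvd_of_le hNH _)

theorem Hex.of_le (hNH : N ≤ H) {m : ℤ} {f : F2} (hex : Hex N m f) : Hex H m f :=
  ⟨by simpa only [quotientMapOfLE_mk'] using congrArg (quotientMapOfLE hNH) hex.1,
    by simpa only [quotientMapOfLE_mk'] using congrArg (quotientMapOfLE hNH) hex.2⟩

theorem IsShadowTgt.of_le (hNH : N ≤ H) {m : ℤ} {f : F2} (hshadow : IsShadowTgt N m f) :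
    IsShadowTgt H m f := by
  obtain ⟨K, hex, ⟨g, hg, hgf⟩, hunit, T, hT₁, hT₂, hTsurj, -⟩ := hshadow
  let φ := quotientMapOfLE hNH
  refine ⟨(φ.comp T).ker, hex.of_le hNH, ⟨g, hg, Subgroup.comap_mono hNH hgf⟩,
    ZMod.isUnit_intCast_of_dvd (Nord_dvd_of_le hNH) hunit, φ.comp T, ?_, ?_,
    (quotientMapOfLE_surjective hNH).comp hTsurj, rfl⟩
  · rw [MonoidHom.comp_apply, hT₁, quotientMapOfLE_mk']
  · rw [MonoidHom.comp_apply, hT₂, quotientMapOfLE_mk']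

end Reduction

theorem reduction_map_general (N H : Subgroup B3) [N.Normal] [H.Normal]
    (hNH : N ≤ H) :
    Nord H ∣ Nord N ∧
    N.comap ι ≤ H.comap ι ∧
    (∀ (m : ℤ) (f : F2), IsShadowTgt N m f → IsShadowTgt H m f) :=
  ⟨Nord_dvd_of_le hNH, Subgroup.comap_mono hNH, fun _ _ => IsShadowTgt.of_le hNH⟩

/-- The reduction map: if N ≤ H then H_ord ∣ N_ord, N ∩ F₂ ≤ H ∩ F₂, and every
pair representing a GT-shadow with target N also represents a GT-shadow with
target H; hence R_{N,H} : GT(N) → GT(H), [m,f] ↦ (m + H_ord ℤ, f(H∩F₂)) is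
well defined. -/
theorem reduction_map (N H : Subgroup B3) [N.Normal] [H.Normal]
    (hNfin : N.FiniteIndex) (hHfin : H.FiniteIndex)
    (hNle : N ≤ PB3) (hHle : H ≤ PB3) (hNH : N ≤ H) :
    Nord H ∣ Nord N ∧
    N.comap ι ≤ H.comap ι ∧
    (∀ (m : ℤ) (f : F2), IsShadowTgt N m f → IsShadowTgt H m f) :=
  reduction_map_general N H hNH
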